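/- Let G be a context-free grammar over a partially ordered terminal alphabet Σ and let A be a bireachable nonterminal of G such that L_A(G) is not a chain. Then 𝓛(G) contains an antichain with exponential growth. -/

import Mathlib

open Filter
open scoped ENNReal

/-- The lexicographic partial order on words induced by a strict order `r` on letters:
`ε R w` for all `w`, and `(x :: w) R (y :: w')` iff `r x y`, or `x = y` and `w R w'`. -/
inductive LexR {α : Type*} (r : α → α → Prop) : List α → List α → Prop
  | nil (w : List α) : LexR r [] w
  | head {x y : α} (w w' : List α) (h : r x y) : LexR r (x :: w) (y :: w')
  | cons (x : α) {w w' : List α} (h : LexR r w w') : LexR r (x :: w) (x :: w')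

/-- Two words are comparable (`u ∼ v`) if `u R v` or `v R u`. -/
def LexComp {α : Type*} (r : α → α → Prop) (u v : List α) : Prop :=
  LexR r u v ∨ LexR r v u

/-- A language is an antichain if any two distinct words of it are incomparable. -/
def IsAntichainLang {α : Type*} (r : α → α → Prop) (L : Set (List α)) : Prop :=
  ∀ u ∈ L, ∀ v ∈ L, u ≠ v → ¬ LexComp r u v

/-- A language is a quasiantichain if any two words of it are incomparable or one is a
prefix of the other. -/
def IsQuasiantichainLang {α : Type*} (r : α → α → Prop) (L : Set (List α)) : Prop :=
  ∀ u ∈ L, ∀ v ∈ L, u <+: v ∨ v <+: u ∨ ¬ LexComp r u v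

/-- A language is a chain if any two words of it are comparable. -/
def IsChainLang {α : Type*} (r : α → α → Prop) (L : Set (List α)) : Prop :=
  ∀ u ∈ L, ∀ v ∈ L, LexComp r u v

/-- `|L|_{=n}`: the number of words of length `n` in `L`. -/
noncomputable def countLen {α : Type*} (L : Set (List α)) (n : ℕ) : ℕ :=
  {w ∈ L | w.length = n}.ncard

/-- `L` has exponential growth of order `ε` if `limsup |L|_{=n} / 2^(εn) > 0`. -/
def ExpGrowthOrder {α : Type*} (L : Set (List α)) (ε : ℝ) : Prop :=
  0 < Filter.limsup (fun n : ℕ => (countLen L n : ℝ≥0∞) / (2 : ℝ≥0∞) ^ (ε * n)) Filter.atTop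

/-- `L` has exponential growth if it has exponential growth of some order `ε > 0`. -/
def ExpGrowth {α : Type*} (L : Set (List α)) : Prop :=
  ∃ ε : ℝ, 0 < ε ∧ ExpGrowthOrder L ε

/-- `L` has polynomial growth if `limsup |L|_{=n} / n^k < ∞` for some `k`. -/
def PolyGrowth {α : Type*} (L : Set (List α)) : Prop :=
  ∃ k : ℕ, Filter.limsup (fun n : ℕ => (countLen L n : ℝ≥0∞) / (n : ℝ≥0∞) ^ k) Filter.atTop < ⊤

/-- `L` is an antichain family if the set of words of length `n` in `L` is an antichain
for every `n`. -/
def AntichainFamily {α : Type*} (r : α → α → Prop) (L : Set (List α)) : Prop :=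
  ∀ n : ℕ, IsAntichainLang r {w ∈ L | w.length = n}

/-- `L` has exponential antichain growth if some subset of `L` is an antichain family
with exponential growth. -/
def ExpAntichainGrowth {α : Type*} (r : α → α → Prop) (L : Set (List α)) : Prop :=
  ∃ L' ⊆ L, AntichainFamily r L' ∧ ExpGrowth L'

/-- `L` has polynomial antichain growth if every antichain family contained in `L`
has polynomial growth. -/
def PolyAntichainGrowth {α : Type*} (r : α → α → Prop) (L : Set (List α)) : Prop :=
  ∀ L' ⊆ L, AntichainFamily r L' → PolyGrowth L'

/-- The Kleene star of a language: all finite concatenations of words of `L`. -/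
def KStarLang {α : Type*} (L : Set (List α)) : Set (List α) :=
  {w | ∃ S : List (List α), (∀ u ∈ S, u ∈ L) ∧ w = S.flatten}

/-- `L_A(G) = {w | A ⇒* wAu for some u}`. -/
def cfgL {T : Type} (G : ContextFreeGrammar T) (A : G.NT) : Set (List T) :=
  {w | ∃ u : List T, G.Derives [Symbol.nonterminal A]
    (w.map Symbol.terminal ++ [Symbol.nonterminal A] ++ u.map Symbol.terminal)}

/-- `R_{A,w}(G) = {u | A ⇒* wAu}`. -/
def cfgR {T : Type} (G : ContextFreeGrammar T) (A : G.NT) (w : List T) : Set (List T) :=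
  {u | G.Derives [Symbol.nonterminal A]
    (w.map Symbol.terminal ++ [Symbol.nonterminal A] ++ u.map Symbol.terminal)}

/-- A nonterminal `A` is bireachable if `S ⇒* uAu'` for some terminal words `u, u'` and
`A ⇒* v` for some terminal word `v`. -/
def CfgBireachable {T : Type} (G : ContextFreeGrammar T) (A : G.NT) : Prop :=
  (∃ u u' : List T, G.Derives [Symbol.nonterminal G.initial]
    (u.map Symbol.terminal ++ [Symbol.nonterminal A] ++ u'.map Symbol.terminal)) ∧
  (∃ v : List T, G.Derives [Symbol.nonterminal A] (v.map Symbol.terminal))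

/-!
Two incomparable words `w₁, w₂ ∈ L_A(G)` first differ at a pair of incomparable letters, so the
blocks `w₁w₂` and `w₂w₁` (both in `L_A(G)`) are incomparable however they are continued. Pumping
`A` along a binary word `σ`, one block per letter, gives words `p·φ(σ)·v·ψ(σ)·q` of `𝓛(G)`; two
of them are incomparable as soon as neither `σ` is a prefix of the other. Feeding in the
prefix-free codes `1ⁿ0s` with `|s| = n` yields `2ⁿ` pairwise incomparable words of length linear
in `n`.
-/

open Function Set

section Lex

variable {α : Type*} {r : α → α → Prop}

theorem LexR.refl : ∀ u : List α, LexR r u u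
  | [] => .nil []
  | x :: u => .cons x (LexR.refl u)

theorem LexComp.refl (u : List α) : LexComp r u u := .inl (LexR.refl u)

theorem lexComp_comm {u v : List α} : LexComp r u v ↔ LexComp r v u := Or.comm

theorem lexR_cons_cons_iff {x y : α} {u v : List α} :
    LexR r (x :: u) (y :: v) ↔ r x y ∨ x = y ∧ LexR r u v := by
  constructor
  · rintro (_ | ⟨_, _, h⟩ | ⟨_, h⟩)
    exacts [.inl h, .inr ⟨rfl, h⟩]
  · rintro (h | ⟨rfl, h⟩)
    exacts [.head _ _ h, .cons _ h]

theorem lexComp_cons_cons_iff {x y : α} {u v : List α} :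
    LexComp r (x :: u) (y :: v) ↔ r x y ∨ r y x ∨ x = y ∧ LexComp r u v := by
  simp only [LexComp, lexR_cons_cons_iff]
  constructor
  · rintro ((h | ⟨rfl, h⟩) | (h | ⟨rfl, h⟩))
    exacts [.inl h, .inr (.inr ⟨rfl, .inl h⟩), .inr (.inl h), .inr (.inr ⟨rfl, .inr h⟩)]
  · rintro (h | h | ⟨rfl, h | h⟩)
    exacts [.inl (.inl h), .inr (.inl h), .inl (.inr ⟨rfl, h⟩), .inr (.inr ⟨rfl, h⟩)]

theorem not_lexComp_append {u v : List α} (h : ¬ LexComp r u v) (X Y : List α) :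
    ¬ LexComp r (u ++ X) (v ++ Y) := by
  induction u generalizing v with
  | nil => exact absurd (.inl (.nil v)) h
  | cons x u ih =>
    cases v with
    | nil => exact absurd (.inr (.nil _)) h
    | cons y v =>
      rw [lexComp_cons_cons_iff] at h
      rw [List.cons_append, List.cons_append, lexComp_cons_cons_iff]
      rintro (hxy | hyx | ⟨rfl, hc⟩)
      exacts [h (.inl hxy), h (.inr (.inl hyx)), ih (fun h' => h (.inr (.inr ⟨rfl, h'⟩))) hc]

theorem not_lexComp_append_left [Std.Irrefl r] {u v : List α} (h : ¬ LexComp r u v)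
    (d : List α) : ¬ LexComp r (d ++ u) (d ++ v) := by
  induction d with
  | nil => exact h
  | cons z d ih => simpa [lexComp_cons_cons_iff, irrefl z] using ih

theorem not_lexComp_flatten_map [Std.Irrefl r] {β : Type*} {φ : β → List α}
    (hφ : ∀ s t, s ≠ t → ¬ LexComp r (φ s) (φ t)) {σ τ : List β}
    (hστ : ¬ σ <+: τ) (hτσ : ¬ τ <+: σ) :
    ¬ LexComp r (σ.map φ).flatten (τ.map φ).flatten := by
  induction σ generalizing τ with
  | nil => exact absurd List.nil_prefix hστ
  | cons s σ ih =>
    cases τ with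
    | nil => exact absurd List.nil_prefix hτσ
    | cons t τ =>
      rw [List.map_cons, List.map_cons, List.flatten_cons, List.flatten_cons]
      by_cases hst : s = t
      · subst hst
        rw [List.prefix_cons_inj] at hστ hτσ
        exact not_lexComp_append_left (ih hστ hτσ) _
      · exact not_lexComp_append (hφ s t hst) _ _

theorem isAntichainLang_range {β : Type*} {F : β → List α}
    (hF : ∀ a b, a ≠ b → ¬ LexComp r (F a) (F b)) : IsAntichainLang r (range F) := by
  rintro _ ⟨a, rfl⟩ _ ⟨b, rfl⟩ hne
  exact hF a b (ne_of_apply_ne F hne)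

theorem injective_of_not_lexComp {β : Type*} {F : β → List α}
    (hF : ∀ a b, a ≠ b → ¬ LexComp r (F a) (F b)) : Injective F := by
  intro a b hab
  by_contra hne
  exact hF a b hne (hab ▸ LexComp.refl _)

end Lex

section MarkedCode

def markedCode (s : List Bool) : List Bool := List.replicate s.length true ++ false :: s

theorem replicate_true_append_false_prefix_iff {n m : ℕ} {s t : List Bool} :
    List.replicate n true ++ false :: s <+: List.replicate m true ++ false :: t ↔
      n = m ∧ s <+: t := by
  induction n generalizing m with
  | zero => cases m <;> simp [List.replicate_succ]
  | succ n ih => cases m <;> simp [List.replicate_succ, ih]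

theorem markedCode_prefix_iff {s t : List Bool} : markedCode s <+: markedCode t ↔ s = t := by
  rw [markedCode, markedCode, replicate_true_append_false_prefix_iff]
  constructor
  · exact fun ⟨hlen, hst⟩ => hst.eq_of_length hlen
  · rintro rfl
    exact ⟨rfl, List.prefix_refl s⟩

theorem length_markedCode (s : List Bool) : (markedCode s).length = 2 * s.length + 1 := by
  simp only [markedCode, List.length_append, List.length_replicate, List.length_cons]
  omega

end MarkedCode

section Growth

variable {α : Type*}

theorem ncard_setOf_length_eq (β : Type*) [Fintype β] (n : ℕ) :
    {s : List β | s.length = n}.ncard = Fintype.card β ^ n := by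
  rw [← Nat.card_coe_set_eq]
  exact (Nat.card_eq_fintype_card (α := List.Vector β n)).trans (card_vector n)

theorem countLen_range_eq {F : List Bool → List α} (hF : Injective F) {g : ℕ → ℕ}
    (hg : Injective g) (hlen : ∀ s, (F s).length = g s.length) (n : ℕ) :
    countLen (range F) (g n) = 2 ^ n := by
  have hfiber : {w ∈ range F | w.length = g n} = F '' {s | s.length = n} := by
    ext w
    simp only [mem_ofPred_eq, mem_range, mem_image]
    constructor
    · rintro ⟨⟨s, rfl⟩, hs⟩
      exact ⟨s, hg (by rw [← hlen, hs]), rfl⟩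
    · rintro ⟨s, rfl, rfl⟩
      exact ⟨⟨s, rfl⟩, hlen s⟩
  rw [countLen, hfiber, hF.injOn.ncard_image, ncard_setOf_length_eq, Fintype.card_bool]

theorem expGrowth_of_pow_le_countLen {L : Set (List α)} {K c : ℕ} (hK : 0 < K)
    (h : ∀ n, 2 ^ n ≤ countLen L (K * n + c)) : ExpGrowth L := by
  have hKR : (0 : ℝ) < K := Nat.cast_pos.2 hK
  refine ⟨1 / K, by positivity, ?_⟩
  set C : ℝ≥0∞ := 2 ^ (-(c / K : ℝ))
  have hC : ∀ n : ℕ,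
      C ≤ (countLen L (K * n + c) : ℝ≥0∞) / 2 ^ (1 / K * ((K * n + c : ℕ) : ℝ)) := by
    intro n
    have hexp : 1 / K * ((K * n + c : ℕ) : ℝ) = n + c / K := by
      push_cast
      field_simp
    calc C = 2 ^ (n : ℝ) / 2 ^ (n + c / K : ℝ) := by
          rw [← ENNReal.rpow_sub _ _ two_ne_zero ENNReal.ofNat_ne_top, sub_add_cancel_left]
      _ = ((2 ^ n : ℕ) : ℝ≥0∞) / 2 ^ (n + c / K : ℝ) := by
          rw [ENNReal.rpow_natCast]
          push_cast
          rfl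
      _ ≤ _ := by
          rw [hexp]
          gcongr
          exact_mod_cast h n
  have hlen : Tendsto (fun n : ℕ => K * n + c) atTop atTop :=
    tendsto_atTop_mono (fun n => le_add_right (Nat.le_mul_of_pos_left n hK)) tendsto_id
  exact (ENNReal.rpow_pos two_pos ENNReal.ofNat_ne_top).trans_le
    (le_limsup_of_frequently_le' (hlen.frequently (.of_forall hC)))

end Growth

section Pumping

variable {α β : Type*}

def pumpedWord (p v q : List α) (φ ψ : β → List α) (σ : List β) : List α :=
  p ++ (σ.map φ).flatten ++ v ++ (σ.reverse.map ψ).flatten ++ q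

theorem not_lexComp_pumpedWord {r : α → α → Prop} [Std.Irrefl r] (p v q : List α)
    {φ : β → List α} (ψ : β → List α) (hφ : ∀ s t, s ≠ t → ¬ LexComp r (φ s) (φ t))
    {σ τ : List β} (hστ : ¬ σ <+: τ) (hτσ : ¬ τ <+: σ) :
    ¬ LexComp r (pumpedWord p v q φ ψ σ) (pumpedWord p v q φ ψ τ) := by
  simpa only [pumpedWord, List.append_assoc] using
    not_lexComp_append_left (not_lexComp_append (not_lexComp_flatten_map hφ hστ hτσ) _ _) p

theorem length_flatten_map_of_length_eq {φ : β → List α} {k : ℕ}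
    (hφ : ∀ b, (φ b).length = k) (σ : List β) : (σ.map φ).flatten.length = σ.length * k := by
  simp [List.length_flatten, Function.comp_def, hφ]

theorem length_pumpedWord (p v q : List α) {φ ψ : β → List α} {k l : ℕ}
    (hφ : ∀ b, (φ b).length = k) (hψ : ∀ b, (ψ b).length = l) (σ : List β) :
    (pumpedWord p v q φ ψ σ).length = p.length + v.length + q.length + σ.length * (k + l) := by
  simp only [pumpedWord, List.length_append, length_flatten_map_of_length_eq hφ,
    length_flatten_map_of_length_eq hψ, List.length_reverse]
  ring

end Pumping

section Grammar

variable {T : Type} {G : ContextFreeGrammar T} {A : G.NT}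

theorem derives_subst {X P Q Z : List (Symbol T G.NT)}
    (h₁ : G.Derives X (P ++ [Symbol.nonterminal A] ++ Q))
    (h₂ : G.Derives [Symbol.nonterminal A] Z) : G.Derives X (P ++ Z ++ Q) :=
  h₁.trans ((h₂.append_left P).append_right Q)

theorem cfgR_append {w₁ w₂ u₁ u₂ : List T} (h₁ : u₁ ∈ cfgR G A w₁) (h₂ : u₂ ∈ cfgR G A w₂) :
    u₂ ++ u₁ ∈ cfgR G A (w₁ ++ w₂) := by
  simpa [cfgR, List.append_assoc] using derives_subst h₁ h₂

theorem flatten_map_mem_cfgR {β : Type*} {φ ψ : β → List T}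
    (hφψ : ∀ b, ψ b ∈ cfgR G A (φ b)) (σ : List β) :
    (σ.reverse.map ψ).flatten ∈ cfgR G A (σ.map φ).flatten := by
  induction σ with
  | nil => simpa [cfgR] using ContextFreeGrammar.Derives.refl [Symbol.nonterminal A]
  | cons b σ ih => simpa using cfgR_append (hφψ b) ih

theorem pumpedWord_mem_language {β : Type*} {p q v : List T} {φ ψ : β → List T}
    (hS : G.Derives [Symbol.nonterminal G.initial]
      (p.map Symbol.terminal ++ [Symbol.nonterminal A] ++ q.map Symbol.terminal))
    (hv : G.Derives [Symbol.nonterminal A] (v.map Symbol.terminal))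
    (hφψ : ∀ b, ψ b ∈ cfgR G A (φ b)) (σ : List β) :
    pumpedWord p v q φ ψ σ ∈ G.language := by
  have hpump := derives_subst (flatten_map_mem_cfgR hφψ σ) hv
  simpa [pumpedWord, List.append_assoc] using derives_subst hS hpump

theorem exists_antichain_expGrowth_of_pumps {r : T → T → Prop} [Std.Irrefl r]
    {p q v : List T} {φ ψ : Bool → List T}
    (hS : G.Derives [Symbol.nonterminal G.initial]
      (p.map Symbol.terminal ++ [Symbol.nonterminal A] ++ q.map Symbol.terminal))
    (hv : G.Derives [Symbol.nonterminal A] (v.map Symbol.terminal))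
    (hφψ : ∀ b, ψ b ∈ cfgR G A (φ b)) (hφ : ¬ LexComp r (φ true) (φ false))
    (hφlen : (φ false).length = (φ true).length) (hψlen : (ψ false).length = (ψ true).length)
    (hpos : 0 < (φ true).length) :
    ∃ L' : Set (List T), L' ⊆ (G.language : Set (List T)) ∧
      IsAntichainLang r L' ∧ ExpGrowth L' := by
  have hφ' : ∀ s t, s ≠ t → ¬ LexComp r (φ s) (φ t) := by
    rintro (_ | _) (_ | _) hst <;> simp only [ne_eq, not_true_eq_false] at hst
    exacts [mt lexComp_comm.1 hφ, hφ]
  let F (s : List Bool) := pumpedWord p v q φ ψ (markedCode s)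
  have hF : ∀ s t, s ≠ t → ¬ LexComp r (F s) (F t) := fun s t hst =>
    not_lexComp_pumpedWord p v q ψ hφ' (mt markedCode_prefix_iff.1 hst)
      (mt markedCode_prefix_iff.1 (Ne.symm hst))
  let K := (φ true).length + (ψ true).length
  let c := p.length + v.length + q.length + K
  let N (n : ℕ) := 2 * K * n + c
  have hK : 0 < 2 * K := by omega
  have hlen : ∀ s, (F s).length = N s.length := by
    intro s
    rw [length_pumpedWord p v q (k := (φ true).length) (l := (ψ true).length)
      (by rintro (_ | _); exacts [hφlen, rfl]) (by rintro (_ | _); exacts [hψlen, rfl]),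
      length_markedCode]
    ring
  have hN : Injective N := fun m n h => by simpa [N, hK.ne'] using h
  refine ⟨range F, range_subset_iff.2 fun s => pumpedWord_mem_language hS hv hφψ _,
    isAntichainLang_range hF, expGrowth_of_pow_le_countLen (c := c) hK fun n => ?_⟩
  exact (countLen_range_eq (injective_of_not_lexComp hF) hN hlen n).ge

end Grammar

theorem cfg_LA_not_chain_exp_antichain_general {T : Type} [PartialOrder T]
    (G : ContextFreeGrammar T) (A : G.NT) (hbi : CfgBireachable G A)
    (hnc : ¬ IsChainLang (· < ·) (cfgL G A)) :
    ∃ L' : Set (List T), L' ⊆ (G.language : Set (List T)) ∧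
      IsAntichainLang (· < ·) L' ∧ ExpGrowth L' := by
  obtain ⟨⟨p, q, hS⟩, v, hv⟩ := hbi
  obtain ⟨w₁, ⟨u₁, h₁⟩, w₂, ⟨u₂, h₂⟩, hw⟩ :
      ∃ w₁ ∈ cfgL G A, ∃ w₂ ∈ cfgL G A, ¬ LexComp (· < ·) w₁ w₂ := by
    simpa [IsChainLang] using hnc
  have hw₁ : w₁ ≠ [] := by
    rintro rfl
    exact hw (.inl (.nil w₂))
  refine exists_antichain_expGrowth_of_pumps (φ := fun b => if b then w₁ ++ w₂ else w₂ ++ w₁)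
    (ψ := fun b => if b then u₂ ++ u₁ else u₁ ++ u₂) hS hv ?_ (not_lexComp_append hw w₂ w₁)
    (by simp [add_comm]) (by simp [add_comm]) (by simp [List.length_pos_iff, hw₁])
  rintro (_ | _)
  exacts [cfgR_append h₂ h₁, cfgR_append h₁ h₂]

/-- If `L_A(G)` is not a chain for some bireachable nonterminal `A`, then `L(G)` contains
an antichain with exponential growth. -/
theorem cfg_LA_not_chain_exp_antichain {T : Type} [Fintype T] [PartialOrder T]
    (G : ContextFreeGrammar T) (A : G.NT) (hbi : CfgBireachable G A)
    (hnc : ¬ IsChainLang (· < ·) (cfgL G A)) :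
    ∃ L' : Set (List T), L' ⊆ (G.language : Set (List T)) ∧
      IsAntichainLang (· < ·) L' ∧ ExpGrowth L' :=
  cfg_LA_not_chain_exp_antichain_general G A hbi hnc
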